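/- arXiv:1812.04947 — 4 statements merged into one kernel-verified Lean document; each statement's English description precedes it below -/
import Mathlib

section
/- Let p : V × V → V be a skew-symmetric k-bilinear map. Then S(S([p,p])) = 2·S([p,p]) (i.e. the Hodge component e_3(3)[p,p] of the Gerstenhaber bracket [p,p] vanishes) if and only if p satisfies the Jacobi identity p(a,p(b,c)) + p(b,p(c,a)) + p(c,p(a,b)) = 0 for all a,b,c ∈ V. -/
/-!
For skew-symmetric `p`, expanding the shuffle operator twice gives the identity
`S(S[p,p]) − 2·S[p,p] = −32·J`, where `J` is the Jacobiator of `p`: skew-symmetry turns every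
term of `S(S[p,p])` into `±p x (p y z)`, and these collect into the cyclic sum. In characteristic
zero the factor `−32` can be cancelled.
-/

/-- A map `f : V → V → V` is `k`-bilinear. -/
def IsBilin (k : Type*) [Field k] {V : Type*} [AddCommGroup V] [Module k V]
    (f : V → V → V) : Prop :=
  (∀ a b c, f (a + b) c = f a c + f b c) ∧ (∀ (r : k) (a b), f (r • a) b = r • f a b) ∧
  (∀ a b c, f a (b + c) = f a b + f a c) ∧ (∀ (r : k) (a b), f a (r • b) = r • f a b)

/-- Gerstenhaber composition of two bilinear maps:
`(f ∘ g)(a,b,c) = f(g(a,b),c) − f(a,g(b,c))`. -/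
def gcirc {V : Type*} [AddCommGroup V] (f g : V → V → V) : V → V → V → V :=
  fun a b c => f (g a b) c - f a (g b c)

/-- Gerstenhaber bracket `[f,g] = f∘g + g∘f` of two bilinear maps. -/
def gbr {V : Type*} [AddCommGroup V] (f g : V → V → V) : V → V → V → V :=
  fun a b c => gcirc f g a b c + gcirc g f a b c

/-- The shuffle operator `S` on trilinear maps:
`(S F)(a,b,c) = 2F(a,b,c) − F(b,a,c) − F(a,c,b) + F(b,c,a) + F(c,a,b)`. -/
def Shuf {V : Type*} [AddCommGroup V] (F : V → V → V → V) : V → V → V → V :=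
  fun a b c => F a b c + F a b c - F b a c - F a c b + F b c a + F c a b

section

variable {V : Type*} [AddCommGroup V]

def jacobiator (p : V → V → V) : V → V → V → V :=
  fun a b c => p a (p b c) + p b (p c a) + p c (p a b)

theorem IsBilin.map_neg_left {k : Type*} [Field k] [Module k V] {p : V → V → V}
    (hp : IsBilin k p) (x y : V) : p (-x) y = -p x y :=
  (AddMonoidHom.mk' (p · y) fun a b => hp.1 a b y).map_neg x

theorem shuf_shuf_gbr_self_sub_two_smul (p : V → V → V) (hskew : ∀ a b, p a b = -p b a)
    (hneg : ∀ x y, p (-x) y = -p x y) :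
    Shuf (Shuf (gbr p p)) - 2 • Shuf (gbr p p) = (-32 : ℤ) • jacobiator p := by
  have hneg_right : ∀ x y, p x (-y) = -p x y := fun x y => by
    rw [hskew, hneg, ← hskew]
  funext a b c
  have hba : p b a = -p a b := hskew b a
  have hca : p c a = -p a c := hskew c a
  have hcb : p c b = -p b c := hskew c b
  have hcomp : ∀ x y z, p (p x y) z = -p z (p x y) := fun x y z => hskew _ _
  simp only [Pi.sub_apply, Pi.smul_apply, Shuf, gbr, gcirc, jacobiator, hcomp, hba, hca, hcb,
    hneg, hneg_right, neg_neg]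
  abel

end

/-- For a skew-symmetric bilinear map `p`, the Hodge component `e₃(3)[p,p]` of the
Gerstenhaber bracket `[p,p]` vanishes (i.e. `S(S([p,p])) = 2·S([p,p])`) if and only if
`p` satisfies the Jacobi identity. -/
theorem stmt0 {k : Type*} [Field k] [CharZero k] {V : Type*} [AddCommGroup V] [Module k V]
    (p : V → V → V) (hbil : IsBilin k p) (hskew : ∀ a b, p a b = - p b a) :
    Shuf (Shuf (gbr p p)) = 2 • Shuf (gbr p p) ↔
      ∀ a b c, p a (p b c) + p b (p c a) + p c (p a b) = 0 := by
  have := IsAddTorsionFree.of_isTorsionFree k V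
  rw [← sub_eq_zero, shuf_shuf_gbr_self_sub_two_smul p hskew hbil.map_neg_left, smul_eq_zero]
  simp [funext_iff, jacobiator]
end

section
/- Let p : V × V → V be a skew-symmetric k-bilinear map and q : V × V → V a symmetric k-bilinear map. Then the Gerstenhaber bracket [p,q] satisfies S([p,q]) = 2·[p,q], i.e. [p,q] lies entirely in the 2-eigenspace of the shuffle operator (so [p,q] = e_3(2)[p,q]). -/
/-! `S F = 2 F` says exactly that `F(b,a,c) + F(a,c,b) = F(b,c,a) + F(c,a,b)`. For `F = [p,q]`
this identity follows term by term from the skew-symmetry of `p` and the symmetry of `q`; the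
only linearity it needs is that `q` is odd in its first argument. -/

theorem IsBilin.map_neg_left_s2 {k : Type*} [Field k] {V : Type*} [AddCommGroup V] [Module k V]
    {f : V → V → V} (hf : IsBilin k f) (a b : V) : f (-a) b = -f a b :=
  map_neg (AddMonoidHom.mk' (fun x => f x b) fun x y => hf.1 x y b) a

theorem Shuf_eq_two_smul {V : Type*} [AddCommGroup V] {F : V → V → V → V}
    (hF : ∀ a b c, F b a c + F a c b = F b c a + F c a b) : Shuf F = 2 • F := by
  funext a b c
  calc Shuf F a b c = 2 • F a b c - (F b a c + F a c b) + (F b c a + F c a b) := by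
        simp only [Shuf, two_smul]; abel
    _ = (2 • F) a b c := by rw [hF]; simp

theorem gbr_swap_add_swap {V : Type*} [AddCommGroup V] {p q : V → V → V}
    (hpskew : ∀ a b, p a b = -p b a) (hqsymm : ∀ a b, q a b = q b a)
    (hqneg : ∀ a b, q (-a) b = -q a b) (a b c : V) :
    gbr p q b a c + gbr p q a c b = gbr p q b c a + gbr p q c a b := by
  simp only [gbr, gcirc]
  rw [hqsymm b a, hqsymm c b, hqsymm c a, hqsymm b (p c a), hqsymm b (p a c), hqsymm a (p c b),
    hqsymm c (p a b), hpskew b a, hpskew c b, hqneg, hqneg, hpskew (q a b) c, hpskew a (q b c)]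
  abel

theorem stmt2_general {k : Type*} [Field k] {V : Type*} [AddCommGroup V] [Module k V]
    (p q : V → V → V) (hqbil : IsBilin k q)
    (hpskew : ∀ a b, p a b = - p b a) (hqsymm : ∀ a b, q a b = q b a) :
    Shuf (gbr p q) = 2 • gbr p q :=
  Shuf_eq_two_smul (gbr_swap_add_swap hpskew hqsymm hqbil.map_neg_left_s2)

/-- For `p` skew-symmetric bilinear and `q` symmetric bilinear, the Gerstenhaber bracket
`[p,q]` satisfies `S([p,q]) = 2·[p,q]`, i.e. it lies in the 2-eigenspace of the shuffle
operator (so `[p,q] = e₃(2)[p,q]`). -/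
theorem stmt2 {k : Type*} [Field k] [CharZero k] {V : Type*} [AddCommGroup V] [Module k V]
    (p q : V → V → V) (hpbil : IsBilin k p) (hqbil : IsBilin k q)
    (hpskew : ∀ a b, p a b = - p b a) (hqsymm : ∀ a b, q a b = q b a) :
    Shuf (gbr p q) = 2 • gbr p q :=
  stmt2_general p q hqbil hpskew hqsymm
end

section
/- Let q : V × V → V be a symmetric k-bilinear map. Then the Gerstenhaber bracket [q,q] satisfies S([q,q]) = 0, i.e. [q,q] lies entirely in the 0-eigenspace (Harrison part) of the shuffle operator (so [q,q] = e_3(1)[q,q]). -/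
/-! For commutative `q`, the associator `q∘q` is `(a,b,c) ↦ P(a,b,c) − P(b,c,a)` with
`P(x,y,z) = q(q(x,y),z)` symmetric in `x, y`; the ten terms of `S(q∘q)` then cancel in pairs.
Since `[q,q] = 2 (q∘q)` and `S` is additive, `S[q,q] = 0`. -/

section

variable {V : Type*} [AddCommGroup V]

theorem shuf_add (F G : V → V → V → V) : Shuf (F + G) = Shuf F + Shuf G := by
  funext a b c
  simp only [Shuf, Pi.add_apply]
  abel

theorem gbr_self (f : V → V → V) : gbr f f = gcirc f f + gcirc f f := rfl

theorem gcirc_self_eq_of_comm {q : V → V → V} (hq : ∀ a b, q a b = q b a) (a b c : V) :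
    gcirc q q a b c = q (q a b) c - q (q b c) a := by
  rw [gcirc, hq a (q b c)]

theorem shuf_gcirc_self_eq_zero_of_comm {q : V → V → V} (hq : ∀ a b, q a b = q b a) :
    Shuf (gcirc q q) = 0 := by
  funext a b c
  simp only [Shuf, gcirc_self_eq_of_comm hq, Pi.zero_apply]
  rw [hq b a, hq c b, hq c a]
  abel

end

theorem stmt3_general {V : Type*} [AddCommGroup V]
    (q : V → V → V) (hqsymm : ∀ a b, q a b = q b a) :
    Shuf (gbr q q) = 0 := by
  rw [gbr_self, shuf_add, shuf_gcirc_self_eq_zero_of_comm hqsymm, add_zero]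

/-- For a symmetric bilinear map `q`, the Gerstenhaber bracket `[q,q]` satisfies
`S([q,q]) = 0`, i.e. `[q,q]` lies in the 0-eigenspace (Harrison part) of the shuffle
operator (so `[q,q] = e₃(1)[q,q]`). -/
theorem stmt3 {k : Type*} [Field k] [CharZero k] {V : Type*} [AddCommGroup V] [Module k V]
    (q : V → V → V) (hqbil : IsBilin k q) (hqsymm : ∀ a b, q a b = q b a) :
    Shuf (gbr q q) = 0 :=
  stmt3_general q hqsymm
end

section
/- Let σ ⊆ ℝ³ be the cone over a convex lattice polygon P with vertices v_1,…,v_N (a_j = (v_j,1)), Λ = σ^∨ ∩ ℤ³, and fix an integer q ≥ 2. For each j set K_j := {r ∈ Λ : ⟨a_j, r⟩ < q} ∩ {r ∈ Λ : ⟨a_{j+1}, r⟩ < q} and U_j := span_ℚ(K_j) ⊆ ℚ³. Then: (i) U_j = ℚ³ if ℓ(j) < q, while U_j = {c ∈ ℚ³ : ⟨c, a_j⟩ = ⟨c, a_{j+1}⟩} if ℓ(j) ≥ q; and (ii) letting J := {j : ℓ(j) ≥ q}, the intersection ∩_{j=1}^N U_j has ℚ-dimension 3 if J = ∅; dimension 2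 if J consists of exactly one element, or of exactly two elements j_1 ≠ j_2 with d_{j_1} and d_{j_2} parallel (ℚ-linearly dependent); and dimension 1 in all other cases. -/
/-!
Write `e_j = v_{j+1} - v_j`, so that `d_j = (e_j, 0)` and `⟨d_j, r⟩ = ⟨a_{j+1}, r⟩ - ⟨a_j, r⟩`
only involves the first two coordinates of `r`. The lattice points `(0,0,1)` and the inner normal
of the facet through `a_j, a_{j+1}` lie in `K_j` and span the plane `⟨c, d_j⟩ = 0`. If
`ℓ(j) ≥ q`, then for `r ∈ K_j` the integer `⟨d_j, r⟩` is a multiple of `ℓ(j)` of absolute value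
`< q`, hence `0`, so `U_j` is that plane; if `ℓ(j) < q`, some `r ∈ K_j` has `⟨d_j, r⟩ = ℓ(j) ≠ 0`,
so `U_j = ℚ³`.

The planes `U_j`, `j ∈ J`, all contain `(0,0,1)` and are determined by the direction of `e_j`:
two of them coincide when the edges are parallel and otherwise meet in the line `ℚ (0,0,1)`.
Distinct parallel edges of a convex polygon point in opposite directions, so no three edges are
pairwise parallel.
-/

noncomputable section Polygon

/-- `2×2` determinant `det(u,w) = u₁w₂ − u₂w₁`. -/
def detz (u w : ℤ × ℤ) : ℤ := u.1 * w.2 - u.2 * w.1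

/-- `a_j := (v_j, 1) ∈ ℤ³`, the primitive generator over the vertex `v_j`. -/
def avec {N : ℕ} (v : Fin N → ℤ × ℤ) (j : Fin N) : ℤ × ℤ × ℤ := ((v j).1, (v j).2, 1)

/-- The pairing `⟨a,r⟩` on `ℤ³`. -/
def dot3 (a r : ℤ × ℤ × ℤ) : ℤ := a.1 * r.1 + a.2.1 * r.2.1 + a.2.2 * r.2.2

/-- `v₁,…,v_N` are the vertices, in cyclic order, of a convex lattice polygon. -/
def IsConvexCycle {N : ℕ} [NeZero N] (v : Fin N → ℤ × ℤ) : Prop :=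
  ∀ j l : Fin N, l ≠ j → l ≠ j + 1 → 0 < detz (v (j + 1) - v j) (v l - v j)

/-- The lattice length `ℓ(j)` of the edge `d_j = a_{j+1} − a_j`: the largest positive
integer `m` with `d_j/m ∈ ℤ³`, i.e. the gcd of the coordinates of `v_{j+1} − v_j`. -/
def latlen {N : ℕ} [NeZero N] (v : Fin N → ℤ × ℤ) (j : Fin N) : ℕ :=
  Int.gcd ((v (j + 1) - v j).1) ((v (j + 1) - v j).2)

/-- The inclusion `ℤ³ → ℚ³`. -/
def castQ (r : ℤ × ℤ × ℤ) : ℚ × ℚ × ℚ := ((r.1 : ℚ), (r.2.1 : ℚ), (r.2.2 : ℚ))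

/-- The pairing of `c ∈ ℚ³` with `a ∈ ℤ³`. -/
def dotQ (c : ℚ × ℚ × ℚ) (a : ℤ × ℤ × ℤ) : ℚ :=
  c.1 * (a.1 : ℚ) + c.2.1 * (a.2.1 : ℚ) + c.2.2 * (a.2.2 : ℚ)

/-- `K_j = {r ∈ Λ : ⟨a_j,r⟩ < q and ⟨a_{j+1},r⟩ < q}`, where `Λ = σ^∨ ∩ ℤ³`. -/
def Kset {N : ℕ} [NeZero N] (v : Fin N → ℤ × ℤ) (q : ℤ) (j : Fin N) :
    Set (ℤ × ℤ × ℤ) :=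
  {r | (∀ l : Fin N, 0 ≤ dot3 (avec v l) r) ∧
    dot3 (avec v j) r < q ∧ dot3 (avec v (j + 1)) r < q}

/-- `U_j = span_ℚ(K_j) ⊆ ℚ³`. -/
def Usub {N : ℕ} [NeZero N] (v : Fin N → ℤ × ℤ) (q : ℤ) (j : Fin N) :
    Submodule ℚ (ℚ × ℚ × ℚ) :=
  Submodule.span ℚ (castQ '' Kset v q j)

section PlaneVectors

def dotz (u w : ℤ × ℤ) : ℤ := u.1 * w.1 + u.2 * w.2

def rot (u : ℤ × ℤ) : ℤ × ℤ := (-u.2, u.1)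

lemma dotz_rot (u w : ℤ × ℤ) : dotz (rot u) w = detz u w := by
  simp only [dotz, rot, detz]; ring

lemma dotz_add_smul_rot (w u y : ℤ × ℤ) (M : ℤ) :
    dotz (w + M • rot u) y = dotz w y + M * detz u y := by
  simp only [dotz, rot, detz, Prod.fst_add, Prod.snd_add, Prod.smul_fst, Prod.smul_snd,
    smul_eq_mul]
  ring

lemma dotz_comm (u w : ℤ × ℤ) : dotz u w = dotz w u := by
  simp only [dotz]; ring

lemma detz_self (u : ℤ × ℤ) : detz u u = 0 := by
  simp only [detz]; ring

lemma dotz_self_pos_of_detz_pos {u y : ℤ × ℤ} (h : 0 < detz u y) : 0 < dotz u u := by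
  have hu : u.1 ≠ 0 ∨ u.2 ≠ 0 := by
    by_contra! h0
    simp [detz, h0.1, h0.2] at h
  rcases hu with hu | hu
  · exact add_pos_of_pos_of_nonneg (mul_self_pos.2 hu) (mul_self_nonneg _)
  · exact add_pos_of_nonneg_of_pos (mul_self_nonneg _) (mul_self_pos.2 hu)

lemma dotz_neg_of_detz_eq_zero {u w y : ℤ × ℤ} (huw : detz u w = 0) (huy : 0 < detz u y)
    (hwy : detz w y < 0) : dotz u w < 0 := by
  have key : detz w y * dotz u u = detz u y * dotz u w := by
    simp only [detz, dotz] at huw ⊢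
    linear_combination (-(u.1 * y.1 + u.2 * y.2)) * huw
  have := dotz_self_pos_of_detz_pos huy
  nlinarith

lemma dotz_pos_of_detz_eq_zero {u w x : ℤ × ℤ} (huw : detz u w = 0) (hw : dotz u w < 0)
    (hx : dotz u x < 0) : 0 < dotz w x := by
  have key : dotz w x * dotz u u = dotz u w * dotz u x := by
    simp only [detz, dotz] at huw ⊢
    linear_combination (u.1 * x.2 - u.2 * x.1) * huw
  have : 0 ≤ dotz u u := add_nonneg (mul_self_nonneg _) (mul_self_nonneg _)
  exact pos_of_mul_pos_left (key ▸ mul_pos_of_neg_of_neg hw hx) this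

end PlaneVectors

section ConvexPolygon

variable {N : ℕ} [NeZero N] {v : Fin N → ℤ × ℤ}

def edge (v : Fin N → ℤ × ℤ) (j : Fin N) : ℤ × ℤ := v (j + 1) - v j

lemma add_one_add_one_ne (hN : 3 ≤ N) (j : Fin N) : j + 1 + 1 ≠ j ∧ j + 1 + 1 ≠ j + 1 := by
  have h1 : ((1 : Fin N) : ℕ) = 1 := by simpa using Nat.mod_eq_of_lt (by omega : 1 < N)
  have h2 : ((1 + 1 : Fin N) : ℕ) = 2 := by
    rw [Fin.val_add, h1]; exact Nat.mod_eq_of_lt (by omega)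
  rw [add_assoc, Ne, Ne, add_eq_left, add_right_inj, Fin.ext_iff, Fin.ext_iff, h2, h1]
  simp

namespace IsConvexCycle

variable (hconv : IsConvexCycle v) (hN : 3 ≤ N)
include hconv hN

lemma detz_edge_succ_pos (j : Fin N) : 0 < detz (edge v j) (edge v (j + 1)) := by
  have h := hconv j (j + 1 + 1) (add_one_add_one_ne hN j).1 (add_one_add_one_ne hN j).2
  convert h using 1
  simp only [detz, edge, Prod.fst_sub, Prod.snd_sub]; ring

lemma edge_ne_zero (j : Fin N) : edge v j ≠ 0 := by
  intro h
  simpa [h, detz] using hconv.detz_edge_succ_pos hN j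

lemma dotz_edge_neg_of_detz_eq_zero {j k : Fin N} (hjk : j ≠ k)
    (h : detz (edge v j) (edge v k) = 0) : dotz (edge v j) (edge v k) < 0 := by
  have hk : k ≠ j + 1 := by
    rintro rfl; exact (hconv.detz_edge_succ_pos hN j).ne' h
  have hj : j ≠ k + 1 := by
    rintro rfl
    have := hconv.detz_edge_succ_pos hN k
    simp only [detz] at h this; linarith
  refine dotz_neg_of_detz_eq_zero h (hconv j k hjk.symm hk) ?_
  have := hconv k j hjk hj
  simp only [detz, edge, Prod.fst_sub, Prod.snd_sub] at this ⊢
  linarith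

lemma not_three_parallel {j k l : Fin N} (hjk : j ≠ k) (hjl : j ≠ l) (hkl : k ≠ l)
    (h₁ : detz (edge v j) (edge v k) = 0) (h₂ : detz (edge v j) (edge v l) = 0)
    (h₃ : detz (edge v k) (edge v l) = 0) : False :=
  (dotz_pos_of_detz_eq_zero h₁ (hconv.dotz_edge_neg_of_detz_eq_zero hN hjk h₁)
    (hconv.dotz_edge_neg_of_detz_eq_zero hN hjl h₂)).not_gt
    (hconv.dotz_edge_neg_of_detz_eq_zero hN hkl h₃)

end IsConvexCycle

end ConvexPolygon

lemma Set.exists_not_rel_of_not_rel_pair {α : Type*} {P : α → α → Prop} {S : Set α}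
    (hP : ∀ a b c, a ≠ b → a ≠ c → b ≠ c → P a b → P a c → P b c → False)
    (hS : S.Nonempty) (hS' : ¬((∃ a, S = {a}) ∨ ∃ a b, a ≠ b ∧ S = {a, b} ∧ P a b)) :
    ∃ a ∈ S, ∃ b ∈ S, ¬P a b := by
  by_contra! hrel
  obtain ⟨a, ha⟩ := hS
  obtain ⟨b, hb, hba⟩ : ∃ b ∈ S, b ≠ a := by
    by_contra! h
    exact hS' (Or.inl ⟨a, Set.eq_singleton_iff_unique_mem.2 ⟨ha, h⟩⟩)
  obtain ⟨c, hc, hca, hcb⟩ : ∃ c ∈ S, c ≠ a ∧ c ≠ b := by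
    by_contra! h
    refine hS' (Or.inr ⟨a, b, hba.symm, Set.Subset.antisymm (fun c hc => ?_) ?_, hrel a ha b hb⟩)
    · by_cases hca : c = a
      · exact Or.inl hca
      · exact Or.inr (h c hc hca)
    · exact Set.insert_subset ha (Set.singleton_subset_iff.2 hb)
  exact hP a b c hba.symm hca.symm hcb.symm (hrel a ha b hb) (hrel a ha c hc) (hrel b hb c hc)

section Lattice

variable {N : ℕ} {v : Fin N → ℤ × ℤ} {q : ℤ}

def affineForm (p w : ℤ × ℤ) : ℤ × ℤ × ℤ := (w.1, w.2, -(w.1 * p.1 + w.2 * p.2))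

lemma dot3_avec_affineForm (p w : ℤ × ℤ) (l : Fin N) :
    dot3 (avec v l) (affineForm p w) = dotz w (v l - p) := by
  simp only [dot3, avec, affineForm, dotz, Prod.fst_sub, Prod.snd_sub]; ring

lemma dot3_avec_sub_dot3_avec (r : ℤ × ℤ × ℤ) (j k : Fin N) :
    dot3 (avec v k) r - dot3 (avec v j) r = dotz (v k - v j) (r.1, r.2.1) := by
  simp only [dot3, avec, dotz, Prod.fst_sub, Prod.snd_sub]; ring

variable [NeZero N]

lemma latlen_eq_dotz_gcdA_gcdB (j : Fin N) :
    (latlen v j : ℤ) = dotz (edge v j) ((edge v j).1.gcdA (edge v j).2,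
      (edge v j).1.gcdB (edge v j).2) :=
  Int.gcd_eq_gcd_ab _ _

lemma latlen_dvd_dotz (j : Fin N) (w : ℤ × ℤ) : (latlen v j : ℤ) ∣ dotz (edge v j) w :=
  dvd_add (dvd_mul_of_dvd_left (Int.gcd_dvd_left _ _) _)
    (dvd_mul_of_dvd_left (Int.gcd_dvd_right _ _) _)

lemma latlen_pos {j : Fin N} (h : edge v j ≠ 0) : 0 < latlen v j :=
  Int.gcd_pos_iff.2 (not_and_or.1 fun h' => h (Prod.ext h'.1 h'.2))

lemma e3_mem_Kset (hq : 1 < q) (j : Fin N) : ((0, 0, 1) : ℤ × ℤ × ℤ) ∈ Kset v q j := by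
  have h : ∀ l, dot3 (avec v l) (0, 0, 1) = 1 := fun l => by simp [dot3, avec]
  exact ⟨fun l => (h l).symm ▸ zero_le_one, (h j).symm ▸ hq, (h (j + 1)).symm ▸ hq⟩

lemma affineForm_rot_edge_mem_Kset (hconv : IsConvexCycle v) (hq : 0 < q) (j : Fin N) :
    affineForm (v j) (rot (edge v j)) ∈ Kset v q j := by
  have h : ∀ l, dot3 (avec v l) (affineForm (v j) (rot (edge v j))) = detz (edge v j) (v l - v j) :=
    fun l => by rw [dot3_avec_affineForm, dotz_rot]
  have hj : detz (edge v j) (v j - v j) = 0 := by simp [detz]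
  have hj1 : detz (edge v j) (v (j + 1) - v j) = 0 := detz_self _
  refine ⟨fun l => ?_, by rw [h, hj]; exact hq, by rw [h, hj1]; exact hq⟩
  rw [h]
  by_cases hl : l = j
  · rw [hl, hj]
  by_cases hl' : l = j + 1
  · rw [hl', hj1]
  exact (hconv j l hl hl').le

/-- Bézout gives `w₀` with `⟨w₀, v_{j+1} - v_j⟩ = ℓ(j)`; adding a large multiple of the inner
normal of the edge makes the form nonnegative at every other vertex. -/
lemma exists_mem_Kset_of_latlen_lt (hconv : IsConvexCycle v) {j : Fin N}
    (hql : (latlen v j : ℤ) < q) :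
    ∃ r ∈ Kset v q j, dot3 (avec v j) r = 0 ∧ dot3 (avec v (j + 1)) r = latlen v j := by
  set w₀ : ℤ × ℤ := ((edge v j).1.gcdA (edge v j).2, (edge v j).1.gcdB (edge v j).2)
  set M : ℤ := ∑ l, |dotz w₀ (v l - v j)|
  have hM : 0 ≤ M := Finset.sum_nonneg fun l _ => abs_nonneg _
  have hr : ∀ l, dot3 (avec v l) (affineForm (v j) (w₀ + M • rot (edge v j))) =
      dotz w₀ (v l - v j) + M * detz (edge v j) (v l - v j) := fun l => by
    rw [dot3_avec_affineForm, dotz_add_smul_rot]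
  have hj : dot3 (avec v j) (affineForm (v j) (w₀ + M • rot (edge v j))) = 0 := by
    rw [hr, sub_self]; simp [dotz, detz]
  have hj1 : dot3 (avec v (j + 1)) (affineForm (v j) (w₀ + M • rot (edge v j))) = latlen v j := by
    rw [hr, ← edge, detz_self, mul_zero, add_zero, dotz_comm, latlen_eq_dotz_gcdA_gcdB]
  refine ⟨_, ⟨fun l => ?_, by rw [hj]; omega, by rw [hj1]; exact hql⟩, hj, hj1⟩
  by_cases hl : l = j
  · exact hl ▸ hj.ge
  by_cases hl' : l = j + 1
  · exact hl' ▸ hj1 ▸ Int.natCast_nonneg _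
  have hdet : 1 ≤ detz (edge v j) (v l - v j) := hconv j l hl hl'
  have hle : |dotz w₀ (v l - v j)| ≤ M :=
    Finset.single_le_sum (f := fun l => |dotz w₀ (v l - v j)|) (fun _ _ => abs_nonneg _)
      (Finset.mem_univ l)
  rw [hr]
  nlinarith [neg_abs_le (dotz w₀ (v l - v j))]

lemma dot3_avec_succ_eq_of_mem_Kset {j : Fin N} (hql : q ≤ (latlen v j : ℤ)) {r : ℤ × ℤ × ℤ}
    (hr : r ∈ Kset v q j) : dot3 (avec v (j + 1)) r = dot3 (avec v j) r := by
  obtain ⟨hnonneg, hj, hj1⟩ := hr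
  have hdiff := dot3_avec_sub_dot3_avec (v := v) r j (j + 1)
  refine sub_eq_zero.1 (Int.eq_zero_of_abs_lt_dvd (hdiff ▸ latlen_dvd_dotz j _) ?_)
  have := hnonneg j
  have := hnonneg (j + 1)
  rw [abs_lt]; constructor <;> linarith

end Lattice

section HorizontalForm

open LinearMap Submodule

def horizForm (u : ℤ × ℤ) : (ℚ × ℚ × ℚ) →ₗ[ℚ] ℚ where
  toFun c := c.1 * u.1 + c.2.1 * u.2
  map_add' a b := by simp only [Prod.fst_add, Prod.snd_add]; ring
  map_smul' m a := by
    simp only [Prod.smul_fst, Prod.smul_snd, smul_eq_mul, RingHom.id_apply]; ring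

lemma horizForm_apply (u : ℤ × ℤ) (c : ℚ × ℚ × ℚ) :
    horizForm u c = c.1 * u.1 + c.2.1 * u.2 := rfl

lemma horizForm_castQ (u : ℤ × ℤ) (r : ℤ × ℤ × ℤ) :
    horizForm u (castQ r) = dotz u (r.1, r.2.1) := by
  simp only [horizForm_apply, castQ, dotz]; push_cast; ring

lemma dotQ_avec_sub_dotQ_avec {N : ℕ} (v : Fin N → ℤ × ℤ) (c : ℚ × ℚ × ℚ) (j k : Fin N) :
    dotQ c (avec v k) - dotQ c (avec v j) = horizForm (v k - v j) c := by
  simp only [dotQ, avec, horizForm_apply, Prod.fst_sub, Prod.snd_sub]; push_cast; ring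

lemma horizForm_e3 (u : ℤ × ℤ) : horizForm u (0, 0, 1) = 0 := by
  simp [horizForm_apply]

variable {u w : ℤ × ℤ}

lemma horizForm_ne_zero (hu : u ≠ 0) : horizForm u ≠ 0 := by
  intro h
  have h₁ := LinearMap.congr_fun h (1, 0, 0)
  have h₂ := LinearMap.congr_fun h (0, 1, 0)
  simp only [horizForm_apply, LinearMap.zero_apply] at h₁ h₂
  exact hu (Prod.ext (by simpa using h₁) (by simpa using h₂))

lemma finrank_ker_horizForm (hu : u ≠ 0) : Module.finrank ℚ (ker (horizForm u)) = 2 := by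
  have := Module.Dual.finrank_ker_add_one_of_ne_zero (horizForm_ne_zero hu)
  simp only [Module.finrank_prod, Module.finrank_self] at this
  omega

lemma ker_horizForm_le_span (hu : u ≠ 0) (z : ℚ) :
    ker (horizForm u) ≤ span ℚ {((-u.2 : ℚ), (u.1 : ℚ), z), (0, 0, 1)} := by
  intro c hc
  have hc : c.1 * u.1 + c.2.1 * u.2 = 0 := hc
  rw [mem_span_pair]
  by_cases h₁ : (u.1 : ℚ) = 0
  · have h₂ : (u.2 : ℚ) ≠ 0 := fun h₂ => hu (Prod.ext (by exact_mod_cast h₁) (by exact_mod_cast h₂))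
    refine ⟨-c.1 / u.2, c.2.2 + c.1 / u.2 * z, ?_⟩
    simp only [Prod.ext_iff, Prod.smul_mk, Prod.mk_add_mk, smul_eq_mul]
    refine ⟨?_, ?_, ?_⟩ <;> field_simp <;> linarith
  · refine ⟨c.2.1 / u.1, c.2.2 - c.2.1 / u.1 * z, ?_⟩
    simp only [Prod.ext_iff, Prod.smul_mk, Prod.mk_add_mk, smul_eq_mul]
    refine ⟨?_, ?_, ?_⟩ <;> field_simp <;> linarith

lemma ker_horizForm_le_of_detz_eq_zero (hu : u ≠ 0) (h : detz u w = 0) :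
    ker (horizForm u) ≤ ker (horizForm w) := by
  refine (ker_horizForm_le_span hu 0).trans (span_le.2 ?_)
  rintro _ (rfl | rfl) <;> simp only [SetLike.mem_coe, mem_ker, horizForm_apply]
  · have : ((detz u w : ℤ) : ℚ) = 0 := by exact_mod_cast h
    simp only [detz] at this; push_cast at this; linear_combination this
  · ring

lemma ker_horizForm_inf_ker_horizForm (h : detz u w ≠ 0) :
    ker (horizForm u) ⊓ ker (horizForm w) = ℚ ∙ ((0, 0, 1) : ℚ × ℚ × ℚ) := by
  refine le_antisymm ?_ ?_
  · rintro c ⟨hu, hw⟩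
    have hu : c.1 * u.1 + c.2.1 * u.2 = 0 := hu
    have hw : c.1 * w.1 + c.2.1 * w.2 = 0 := hw
    have hd : ((detz u w : ℤ) : ℚ) ≠ 0 := by exact_mod_cast h
    simp only [detz] at hd; push_cast at hd
    have h₁ : c.1 = 0 := by
      refine (mul_eq_zero.1 ?_).resolve_right hd
      linear_combination w.2 * hu - u.2 * hw
    have h₂ : c.2.1 = 0 := by
      refine (mul_eq_zero.1 ?_).resolve_right hd
      linear_combination u.1 * hw - w.1 * hu
    exact mem_span_singleton.2 ⟨c.2.2, by simp [Prod.ext_iff, h₁, h₂]⟩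
  · rw [span_singleton_le_iff_mem]
    exact ⟨horizForm_e3 u, horizForm_e3 w⟩

end HorizontalForm

section Usub

open LinearMap Submodule

variable {N : ℕ} [NeZero N] {v : Fin N → ℤ × ℤ} {q : ℤ}
  (hconv : IsConvexCycle v) (hN : 3 ≤ N) (hq : 1 < q)
include hconv hN hq

lemma ker_horizForm_edge_le_Usub (j : Fin N) : ker (horizForm (edge v j)) ≤ Usub v q j := by
  set r := affineForm (v j) (rot (edge v j))
  refine (ker_horizForm_le_span (hconv.edge_ne_zero hN j) (r.2.2 : ℚ)).trans (span_le.2 ?_)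
  rintro _ (rfl | rfl)
  · exact subset_span ⟨r, affineForm_rot_edge_mem_Kset hconv (by omega) j, by
      simp [castQ, r, affineForm, rot]⟩
  · exact subset_span ⟨(0, 0, 1), e3_mem_Kset hq j, by simp [castQ]⟩

lemma Usub_eq_ker {j : Fin N} (hql : q ≤ (latlen v j : ℤ)) :
    Usub v q j = ker (horizForm (edge v j)) := by
  refine le_antisymm (span_le.2 ?_) (ker_horizForm_edge_le_Usub hconv hN hq j)
  rintro _ ⟨r, hr, rfl⟩
  rw [SetLike.mem_coe, mem_ker, horizForm_castQ, edge, ← dot3_avec_sub_dot3_avec,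
    dot3_avec_succ_eq_of_mem_Kset hql hr, sub_self, Int.cast_zero]

lemma Usub_eq_top {j : Fin N} (hql : (latlen v j : ℤ) < q) : Usub v q j = ⊤ := by
  obtain ⟨r, hrK, hj, hj1⟩ := exists_mem_Kset_of_latlen_lt hconv hql
  have hr : horizForm (edge v j) (castQ r) = latlen v j := by
    rw [horizForm_castQ, edge, ← dot3_avec_sub_dot3_avec, hj, hj1, sub_zero, Int.cast_natCast]
  have hsurj : Function.Surjective (horizForm (edge v j)) := range_eq_top.1 <|
    Module.Dual.range_eq_top_of_ne_zero (horizForm_ne_zero (hconv.edge_ne_zero hN j))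
  refine (isCoatom_ker_of_surjective hsurj).2 _ (SetLike.lt_iff_le_and_exists.2
    ⟨ker_horizForm_edge_le_Usub hconv hN hq j, castQ r, subset_span ⟨r, hrK, rfl⟩, ?_⟩)
  rw [mem_ker, hr]
  exact_mod_cast (latlen_pos (hconv.edge_ne_zero hN j)).ne'

lemma iInf_Usub : ⨅ j, Usub v q j = ⨅ j ∈ {j : Fin N | q ≤ (latlen v j : ℤ)},
    ker (horizForm (edge v j)) := by
  refine iInf_congr fun j => ?_
  by_cases hj : q ≤ (latlen v j : ℤ)
  · rw [iInf_pos (show j ∈ {j : Fin N | q ≤ (latlen v j : ℤ)} from hj),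
      Usub_eq_ker hconv hN hq hj]
  · rw [iInf_neg (show j ∉ {j : Fin N | q ≤ (latlen v j : ℤ)} from hj),
      Usub_eq_top hconv hN hq (not_le.1 hj)]

end Usub

/-- Let `σ ⊆ ℝ³` be the cone over a convex lattice polygon `P` with vertices
`v₁,…,v_N` (`a_j = (v_j,1)`), `Λ = σ^∨ ∩ ℤ³`, and fix an integer `q ≥ 2`.  With
`K_j := {r ∈ Λ : ⟨a_j,r⟩ < q, ⟨a_{j+1},r⟩ < q}` and `U_j := span_ℚ K_j ⊆ ℚ³`:
(i) `U_j = ℚ³` if `ℓ(j) < q`, while `U_j = {c : ⟨c,a_j⟩ = ⟨c,a_{j+1}⟩}` if `ℓ(j) ≥ q`;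
(ii) with `J := {j : ℓ(j) ≥ q}`, the intersection `∩_j U_j` has `ℚ`-dimension `3` if
`J = ∅`; `2` if `J` is a singleton, or a pair `{j₁,j₂}` with `d_{j₁} ∥ d_{j₂}`; and `1`
in all other cases. -/
theorem stmt19 (N : ℕ) [NeZero N] (hN : 3 ≤ N)
    (v : Fin N → ℤ × ℤ) (hconv : IsConvexCycle v) (q : ℤ) (hq : 2 ≤ q) :
    (∀ j : Fin N,
      (((latlen v j : ℤ) < q → Usub v q j = ⊤) ∧
       (q ≤ (latlen v j : ℤ) →
        ∀ c : ℚ × ℚ × ℚ, c ∈ Usub v q j ↔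
          dotQ c (avec v j) = dotQ c (avec v (j + 1))))) ∧
    (({j : Fin N | q ≤ (latlen v j : ℤ)} = ∅ →
        Module.finrank ℚ ↥(⨅ j : Fin N, Usub v q j) = 3) ∧
     (((∃ j₀ : Fin N, {j : Fin N | q ≤ (latlen v j : ℤ)} = {j₀}) ∨
       (∃ j₁ j₂ : Fin N, j₁ ≠ j₂ ∧ {j : Fin N | q ≤ (latlen v j : ℤ)} = {j₁, j₂} ∧
         detz (v (j₁ + 1) - v j₁) (v (j₂ + 1) - v j₂) = 0)) →
        Module.finrank ℚ ↥(⨅ j : Fin N, Usub v q j) = 2) ∧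
     (({j : Fin N | q ≤ (latlen v j : ℤ)} ≠ ∅ ∧
       ¬((∃ j₀ : Fin N, {j : Fin N | q ≤ (latlen v j : ℤ)} = {j₀}) ∨
         (∃ j₁ j₂ : Fin N, j₁ ≠ j₂ ∧ {j : Fin N | q ≤ (latlen v j : ℤ)} = {j₁, j₂} ∧
           detz (v (j₁ + 1) - v j₁) (v (j₂ + 1) - v j₂) = 0))) →
        Module.finrank ℚ ↥(⨅ j : Fin N, Usub v q j) = 1)) := by
  have hq₁ : 1 < q := hq
  have hker (j : Fin N) := finrank_ker_horizForm (hconv.edge_ne_zero hN j)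
  rw [iInf_Usub hconv hN hq₁]
  refine ⟨fun j => ⟨Usub_eq_top hconv hN hq₁, fun hj c => ?_⟩, fun hS => ?_, ?_, ?_⟩
  · rw [Usub_eq_ker hconv hN hq₁ hj, LinearMap.mem_ker, edge, ← dotQ_avec_sub_dotQ_avec,
      sub_eq_zero, eq_comm]
  · rw [hS, iInf_emptyset, finrank_top]
    simp [Module.finrank_prod]
  · rintro (⟨j, hS⟩ | ⟨j, k, -, hS, hjk⟩)
    · rw [hS, iInf_singleton, hker]
    · rw [hS, iInf_insert, iInf_singleton,
        inf_eq_left.2 (ker_horizForm_le_of_detz_eq_zero (w := edge v k)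
          (hconv.edge_ne_zero hN j) hjk), hker]
  · rintro ⟨hS, hS'⟩
    obtain ⟨j, hj, k, hk, hjk⟩ := Set.exists_not_rel_of_not_rel_pair
      (fun _ _ _ => hconv.not_three_parallel hN) (Set.nonempty_iff_ne_empty.2 hS) hS'
    have hline : ⨅ j ∈ {j : Fin N | q ≤ (latlen v j : ℤ)}, LinearMap.ker (horizForm (edge v j)) =
        ℚ ∙ ((0, 0, 1) : ℚ × ℚ × ℚ) :=
      le_antisymm ((le_inf (biInf_le _ hj) (biInf_le _ hk)).trans
          (ker_horizForm_inf_ker_horizForm hjk).le)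
        ((Submodule.span_singleton_le_iff_mem _ _).2
          (Submodule.mem_iInf _ |>.2 fun _ => Submodule.mem_iInf _ |>.2 fun _ => horizForm_e3 _))
    rw [hline, finrank_span_singleton (by simp)]

end Polygon
end
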